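/- arXiv:2511.03028 — 7 statements merged into one kernel-verified Lean document; each statement's English description precedes it below -/
import Mathlib

section
/- Let M be an m×r integer matrix, let P be an m×m signed permutation matrix, and let U be an r×r unimodular integer matrix. Then the graph (PMU)^SACG is isomorphic to the graph M^SACG. -/
/-- The subgroup of `ℤ^m` generated by the columns of `M`. -/
def colSpan (m r : ℕ) (M : Matrix (Fin m) (Fin r) ℤ) : AddSubgroup (Fin m → ℤ) :=
  AddSubgroup.closure (Set.range fun j : Fin r => fun i : Fin m => M i j)

/-- The standardized Abelian Cayley graph associated to `M`. -/
def SACG (m r : ℕ) (M : Matrix (Fin m) (Fin r) ℤ) :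
    SimpleGraph ((Fin m → ℤ) ⧸ colSpan m r M) where
  Adj x y := x ≠ y ∧ ∃ i : Fin m,
    x - y = QuotientAddGroup.mk (Pi.single i (1 : ℤ)) ∨
    y - x = QuotientAddGroup.mk (Pi.single i (1 : ℤ))
  symm := by
    constructor
    rintro x y ⟨hne, i, h⟩
    exact ⟨hne.symm, i, h.symm⟩
  loopless := by constructor; rintro x ⟨h, -⟩; exact h rfl

/-- A square integer matrix is unimodular if its determinant is `±1`. -/
def IsUnimodular {k : ℕ} (U : Matrix (Fin k) (Fin k) ℤ) : Prop :=
  U.det = 1 ∨ U.det = -1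

/-- A signed permutation matrix: exactly one nonzero entry in each row and in each
column, each such entry being `±1`. -/
def IsSignedPerm {k : ℕ} (P : Matrix (Fin k) (Fin k) ℤ) : Prop :=
  (∀ i, ∃! j, P i j ≠ 0) ∧ (∀ j, ∃! i, P i j ≠ 0) ∧
    ∀ i j, P i j = 0 ∨ P i j = 1 ∨ P i j = -1

/-! Multiplication by `Pᵀ = P⁻¹` is an automorphism of `ℤ^m` that permutes the generators `±eᵢ`
and carries the column lattice of `P M U` onto that of `M U`, which is the column lattice of `M`
because `U` is invertible over `ℤ`. Such an automorphism descends to an isomorphism of the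
quotient groups that preserves adjacency. -/

open scoped Matrix

lemma colSpan_eq_range {m r : ℕ} (M : Matrix (Fin m) (Fin r) ℤ) :
    colSpan m r M = (LinearMap.range M.mulVecLin).toAddSubgroup := by
  rw [colSpan, Matrix.range_mulVecLin, Submodule.span_int_eq_addSubgroupClosure]
  rfl

lemma colSpan_mul_left {m r : ℕ} (A : Matrix (Fin m) (Fin m) ℤ) (M : Matrix (Fin m) (Fin r) ℤ) :
    colSpan m r (A * M) = (colSpan m r M).map A.mulVecLin.toAddMonoidHom := by
  rw [colSpan_eq_range, colSpan_eq_range, Matrix.mulVecLin_mul, LinearMap.range_comp]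
  rfl

lemma colSpan_mul_of_isUnimodular {m r : ℕ} (M : Matrix (Fin m) (Fin r) ℤ)
    {U : Matrix (Fin r) (Fin r) ℤ} (hU : IsUnimodular U) :
    colSpan m r (M * U) = colSpan m r M := by
  have hdet : IsUnit U.det := by
    rcases hU with h | h <;> simp [h]
  have hsurj : Function.Surjective U.mulVecLin := fun v =>
    ⟨U⁻¹ *ᵥ v, by simp [Matrix.mulVec_mulVec, Matrix.mul_nonsing_inv U hdet]⟩
  rw [colSpan_eq_range, colSpan_eq_range, Matrix.mulVecLin_mul,
    LinearMap.range_comp_of_range_eq_top _ (LinearMap.range_eq_top.2 hsurj)]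

def signedUnitVectors (m : ℕ) : Set (Fin m → ℤ) :=
  {v | ∃ i, v = Pi.single i 1 ∨ v = -Pi.single i 1}

lemma SACG_adj_iff {m r : ℕ} {M : Matrix (Fin m) (Fin r) ℤ} {x y : (Fin m → ℤ) ⧸ colSpan m r M} :
    (SACG m r M).Adj x y ↔
      x ≠ y ∧ ∃ v ∈ signedUnitVectors m, x - y = (v : (Fin m → ℤ) ⧸ colSpan m r M) := by
  simp only [SACG, signedUnitVectors, Set.mem_ofPred_eq]
  refine and_congr_right fun _ => ⟨?_, ?_⟩
  · rintro ⟨i, h | h⟩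
    · exact ⟨_, ⟨i, Or.inl rfl⟩, h⟩
    · refine ⟨_, ⟨i, Or.inr rfl⟩, ?_⟩
      rw [QuotientAddGroup.mk_neg, ← h, neg_sub]
  · rintro ⟨v, ⟨i, rfl | rfl⟩, h⟩
    · exact ⟨i, Or.inl h⟩
    · refine ⟨i, Or.inr ?_⟩
      rw [← neg_sub, h, QuotientAddGroup.mk_neg, neg_neg]

def SACG.isoOfAddEquiv {m r s : ℕ} {M : Matrix (Fin m) (Fin r) ℤ} {N : Matrix (Fin m) (Fin s) ℤ}
    (e : (Fin m → ℤ) ≃+ (Fin m → ℤ)) (he : (colSpan m r M).map e.toAddMonoidHom = colSpan m s N)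
    (hS : ∀ v, e v ∈ signedUnitVectors m ↔ v ∈ signedUnitVectors m) :
    SACG m r M ≃g SACG m s N where
  toEquiv := (QuotientAddGroup.congr _ _ e he).toEquiv
  map_rel_iff' {x y} := by
    set ψ := QuotientAddGroup.congr _ _ e he
    have hψ (z : Fin m → ℤ) : ψ z = (e z : (Fin m → ℤ) ⧸ colSpan m s N) := rfl
    change (SACG m s N).Adj (ψ x) (ψ y) ↔ _
    rw [SACG_adj_iff, SACG_adj_iff, ← map_sub, ψ.injective.ne_iff]
    refine and_congr_right fun _ => ⟨?_, ?_⟩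
    · rintro ⟨v, hv, h⟩
      refine ⟨e.symm v, (hS _).1 (by rwa [e.apply_symm_apply]), ψ.injective ?_⟩
      rw [h, hψ, e.apply_symm_apply]
    · rintro ⟨v, hv, h⟩
      exact ⟨e v, (hS v).2 hv, by rw [h, hψ]⟩

namespace IsSignedPerm

variable {k : ℕ} {P : Matrix (Fin k) (Fin k) ℤ}

lemma transpose (hP : IsSignedPerm P) : IsSignedPerm Pᵀ :=
  ⟨hP.2.1, hP.1, fun i j => hP.2.2 j i⟩

lemma exists_col (hP : IsSignedPerm P) (j : Fin k) :
    ∃ i, (P i j = 1 ∨ P i j = -1) ∧ ∀ l, l ≠ i → P l j = 0 := by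
  obtain ⟨i, hi, huniq⟩ := hP.2.1 j
  refine ⟨i, (hP.2.2 i j).resolve_left hi, fun l hl => ?_⟩
  by_contra h
  exact hl (huniq l h)

lemma mulVec_single_mem (hP : IsSignedPerm P) (j : Fin k) :
    P *ᵥ Pi.single j 1 ∈ signedUnitVectors k := by
  obtain ⟨i, hi, hzero⟩ := hP.exists_col j
  have hcol : P *ᵥ Pi.single j 1 = Pi.single i (P i j) := by
    rw [Matrix.mulVec_single_one]
    funext l
    rcases eq_or_ne l i with rfl | hl
    · simp
    · simp [hl, hzero l hl]
  refine ⟨i, ?_⟩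
  rcases hi with h | h
  · exact Or.inl (by rw [hcol, h])
  · exact Or.inr (by rw [hcol, h, Pi.single_neg])

lemma mulVec_mem (hP : IsSignedPerm P) {v : Fin k → ℤ} (hv : v ∈ signedUnitVectors k) :
    P *ᵥ v ∈ signedUnitVectors k := by
  obtain ⟨j, rfl | rfl⟩ := hv
  · exact hP.mulVec_single_mem j
  · obtain ⟨i, h | h⟩ := hP.mulVec_single_mem j
    · exact ⟨i, Or.inr (by rw [Matrix.mulVec_neg, h])⟩
    · exact ⟨i, Or.inl (by rw [Matrix.mulVec_neg, h, neg_neg])⟩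

lemma transpose_mul_self (hP : IsSignedPerm P) : Pᵀ * P = 1 := by
  ext j l
  obtain ⟨i, hi, hzero⟩ := hP.exists_col j
  rw [Matrix.mul_apply, Finset.sum_eq_single i (fun i' _ hi' => by simp [hzero i' hi'])
    (by simp), Matrix.transpose_apply]
  rcases eq_or_ne j l with rfl | hjl
  · rcases hi with h | h <;> simp [h]
  · have hil : P i l = 0 := by
      by_contra h
      exact hjl ((hP.1 i).unique (by rcases hi with h' | h' <;> simp [h']) h)
    simp [hil, hjl]

lemma mul_transpose_self (hP : IsSignedPerm P) : P * Pᵀ = 1 := by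
  simpa using hP.transpose.transpose_mul_self

def transposeMulVecEquiv (hP : IsSignedPerm P) : (Fin k → ℤ) ≃+ (Fin k → ℤ) where
  toFun := Pᵀ.mulVec
  invFun := P.mulVec
  left_inv v := by rw [Matrix.mulVec_mulVec, hP.mul_transpose_self, Matrix.one_mulVec]
  right_inv v := by rw [Matrix.mulVec_mulVec, hP.transpose_mul_self, Matrix.one_mulVec]
  map_add' := Matrix.mulVec_add _

lemma transposeMulVecEquiv_mem_iff (hP : IsSignedPerm P) (v : Fin k → ℤ) :
    hP.transposeMulVecEquiv v ∈ signedUnitVectors k ↔ v ∈ signedUnitVectors k := by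
  refine ⟨fun h => ?_, hP.transpose.mulVec_mem⟩
  rw [← hP.transposeMulVecEquiv.symm_apply_apply v]
  exact hP.mulVec_mem h

end IsSignedPerm

theorem stmt_1 (m r : ℕ) (M : Matrix (Fin m) (Fin r) ℤ)
    (P : Matrix (Fin m) (Fin m) ℤ) (U : Matrix (Fin r) (Fin r) ℤ)
    (hP : IsSignedPerm P) (hU : IsUnimodular U) :
    Nonempty ((SACG m r (P * M * U)) ≃g (SACG m r M)) := by
  have hmap : (colSpan m r (P * M * U)).map hP.transposeMulVecEquiv.toAddMonoidHom =
      colSpan m r M :=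
    calc _ = colSpan m r (Pᵀ * (P * M * U)) := (colSpan_mul_left _ _).symm
      _ = colSpan m r (M * U) := by
        rw [← Matrix.mul_assoc, ← Matrix.mul_assoc, hP.transpose_mul_self, Matrix.one_mul]
      _ = colSpan m r M := colSpan_mul_of_isUnimodular M hU
  exact ⟨SACG.isoOfAddEquiv _ hmap hP.transposeMulVecEquiv_mem_iff⟩
end

section
/- Let m ≥ 2 and let M be an m×r integer matrix. Let M' be the (m−1)×r integer matrix whose first row is the sum of the first two rows of M and whose remaining rows are rows 3 through m of M. If no standard basis vector of ℤ^(m−1) lies in the subgroup generated by the columns of M', then the linear map ℤ^m → ℤ^(m−1) sending (x_1, x_2, x_3, …, x_m) to (x_1 + x_2, x_3, …, x_m) induces a graph homomorphism from M^SACG to M'^SACG; in particular, χ(M^SACG) ≤ χ(M'^SACG). -/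
/-!
The contraction `(x_1, x_2, x_3, …) ↦ (x_1 + x_2, x_3, …)` maps each column of `M` to the
corresponding column of `M'` and each unit vector to a unit vector, so it descends to the
quotient groups and sends adjacent vertices to vertices whose difference is `±e_i`. Such
vertices are distinct because no unit vector lies in the column span of `M'`.
-/

def mergeFirstTwo (R : Type*) [AddCommMonoid R] (m : ℕ) :
    (Fin (m + 2) → R) →+ (Fin (m + 1) → R) where
  toFun x := Fin.cons (x 0 + x 1) (fun i : Fin m => x i.succ.succ)
  map_zero' := by
    funext k
    refine Fin.cases ?_ (fun _ => ?_) k <;> simp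
  map_add' x y := by
    funext k
    refine Fin.cases ?_ (fun _ => ?_) k <;> simp [add_add_add_comm]

theorem mergeFirstTwo_apply {R : Type*} [AddCommMonoid R] (m : ℕ) (x : Fin (m + 2) → R) :
    mergeFirstTwo R m x = Fin.cons (x 0 + x 1) (fun i : Fin m => x i.succ.succ) :=
  rfl

theorem mergeFirstTwo_single {R : Type*} [AddCommMonoid R] (m : ℕ) (i : Fin (m + 2)) (a : R) :
    mergeFirstTwo R m (Pi.single i a) = Pi.single (Fin.predAbove 0 i) a := by
  funext k
  induction k using Fin.cases <;> induction i using Fin.cases with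
  | zero => simp [mergeFirstTwo]
  | succ j =>
    induction j using Fin.cases <;>
      simp [mergeFirstTwo, Pi.single_apply, Fin.succ_succ_ne_one, (Fin.succ_succ_ne_one _).symm]

theorem col_mem_colSpan {m r : ℕ} (M : Matrix (Fin m) (Fin r) ℤ) (j : Fin r) :
    (fun i => M i j) ∈ colSpan m r M :=
  AddSubgroup.subset_closure ⟨j, rfl⟩

theorem colSpan_le_comap {m n r s : ℕ} {M : Matrix (Fin m) (Fin r) ℤ}
    {M' : Matrix (Fin n) (Fin s) ℤ} (φ : (Fin m → ℤ) →+ (Fin n → ℤ))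
    (hφ : ∀ j, φ (fun i => M i j) ∈ colSpan n s M') :
    colSpan m r M ≤ (colSpan n s M').comap φ := by
  rw [colSpan, AddSubgroup.closure_le]
  rintro _ ⟨j, rfl⟩
  exact hφ j

namespace SACG

variable {m n r s : ℕ} {M : Matrix (Fin m) (Fin r) ℤ} {M' : Matrix (Fin n) (Fin s) ℤ}

def homOfMapSingle (φ : (Fin m → ℤ) →+ (Fin n → ℤ))
    (hφ : colSpan m r M ≤ (colSpan n s M').comap φ) (σ : Fin m → Fin n)
    (hσ : ∀ i, φ (Pi.single i 1) = Pi.single (σ i) 1)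
    (hloops : ∀ i, Pi.single (σ i) (1 : ℤ) ∉ colSpan n s M') :
    SACG m r M →g SACG n s M' where
  toFun := QuotientAddGroup.map _ _ φ hφ
  map_rel' := by
    rintro x y ⟨-, i, hxy⟩
    set F := QuotientAddGroup.map _ _ φ hφ
    have hF : ∀ x y, x - y = QuotientAddGroup.mk (Pi.single i 1) →
        F x - F y = QuotientAddGroup.mk (Pi.single (σ i) 1) := fun x y h => by
      rw [← map_sub, h, QuotientAddGroup.map_mk, hσ]
    refine ⟨fun hxy' => hloops i ?_, σ i, hxy.imp (hF x y) (hF y x)⟩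
    rw [← QuotientAddGroup.eq_zero_iff]
    rcases hxy with h | h <;> simp [← hF _ _ h, hxy']

theorem homOfMapSingle_mk (φ : (Fin m → ℤ) →+ (Fin n → ℤ))
    (hφ : colSpan m r M ≤ (colSpan n s M').comap φ) (σ : Fin m → Fin n)
    (hσ : ∀ i, φ (Pi.single i 1) = Pi.single (σ i) 1)
    (hloops : ∀ i, Pi.single (σ i) (1 : ℤ) ∉ colSpan n s M') (x : Fin m → ℤ) :
    homOfMapSingle φ hφ σ hσ hloops (QuotientAddGroup.mk x) = QuotientAddGroup.mk (φ x) :=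
  rfl

end SACG

theorem stmt_3 (m r : ℕ) (M : Matrix (Fin (m + 2)) (Fin r) ℤ)
    (M' : Matrix (Fin (m + 1)) (Fin r) ℤ)
    (hM' : ∀ j : Fin r,
      (fun i => M' i j) = Fin.cons (M 0 j + M 1 j) (fun i : Fin m => M i.succ.succ j))
    (hloops : ∀ i : Fin (m + 1),
      (Pi.single i (1 : ℤ) : Fin (m + 1) → ℤ) ∉ colSpan (m + 1) r M') :
    (∃ f : (SACG (m + 2) r M) →g (SACG (m + 1) r M'),
        ∀ x : Fin (m + 2) → ℤ,
          f (QuotientAddGroup.mk x) =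
            QuotientAddGroup.mk (Fin.cons (x 0 + x 1) (fun i : Fin m => x i.succ.succ))) ∧
      (SACG (m + 2) r M).chromaticNumber ≤ (SACG (m + 1) r M').chromaticNumber := by
  have hcols : colSpan (m + 2) r M ≤ (colSpan (m + 1) r M').comap (mergeFirstTwo ℤ m) :=
    colSpan_le_comap _ fun j => by
      rw [mergeFirstTwo_apply, ← hM']
      exact col_mem_colSpan M' j
  let f := SACG.homOfMapSingle _ hcols _ (fun i => mergeFirstTwo_single m i 1) fun _ => hloops _
  exact ⟨⟨f, SACG.homOfMapSingle_mk _ _ _ _ _⟩, SimpleGraph.chromaticNumber_mono_of_hom f⟩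
end

section
/- Let M be an m×r integer matrix such that no standard basis vector of ℤ^m lies in the subgroup H generated by the columns of M. Then the graph M^SACG is bipartite if and only if every column of M has even entry-sum. -/
/-- A graph is bipartite if its vertex set can be partitioned into two sets such that
every edge has one endpoint in each set. -/
def IsBipartite {V : Type*} (G : SimpleGraph V) : Prop :=
  ∃ A B : Set V, (∀ v, v ∈ A ∨ v ∈ B) ∧ (∀ v, ¬(v ∈ A ∧ v ∈ B)) ∧
    ∀ v w, G.Adj v w → (v ∈ A ∧ w ∈ B) ∨ (v ∈ B ∧ w ∈ A)

/-!
The entry sum mod 2 is a homomorphism `σ : ℤ^m → ℤ/2` sending every `e_i` to `1`. If all columns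
have even sum, `σ` descends to `ℤ^m / H` and its two fibres form a bipartition. Conversely, read a
bipartition as a colouring `c` with values in `ℤ/2`. Since `e_i ∉ H`, the vertices `x` and
`x + e_i` are adjacent, so `c (x + e_i) = c x + 1`. The `w` with `c (x + w) = c x + σ w` for all `x`
form a subgroup containing every `e_i`, hence all of `ℤ^m`, and `w ∈ H` forces `σ w = 0`.
-/

open QuotientAddGroup

lemma isBipartite_iff_exists_zmod_two_coloring {V : Type*} (G : SimpleGraph V) :
    IsBipartite G ↔ ∃ c : V → ZMod 2, ∀ v w, G.Adj v w → c v ≠ c w := by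
  classical
  constructor
  · rintro ⟨A, B, -, hdisj, hadj⟩
    refine ⟨fun v => if v ∈ A then 0 else 1, fun v w h => ?_⟩
    rcases hadj v w h with ⟨hv, hw⟩ | ⟨hv, hw⟩
    · simpa [hv] using fun h => hdisj w ⟨h, hw⟩
    · simpa [hw] using fun h => hdisj v ⟨h, hv⟩
  · rintro ⟨c, hc⟩
    refine ⟨{v | c v = 0}, {v | c v = 1}, fun v => ?_, fun v => ?_, fun v w h => ?_⟩
    · show c v = 0 ∨ c v = 1
      generalize c v = a; decide +revert
    · show ¬(c v = 0 ∧ c v = 1)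
      generalize c v = a; decide +revert
    · show (c v = 0 ∧ c w = 1) ∨ (c v = 1 ∧ c w = 0)
      have := hc v w h
      generalize c v = a, c w = b at this; decide +revert

lemma map_add_eq_add_of_mem_closure {G A : Type*} [AddGroup G] [AddCommGroup A]
    (c : G → A) (φ : G →+ A) {S : Set G} (hS : ∀ s ∈ S, ∀ x, c (x + s) = c x + φ s)
    {w : G} (hw : w ∈ AddSubgroup.closure S) (x : G) : c (x + w) = c x + φ w := by
  induction hw using AddSubgroup.closure_induction generalizing x with
  | mem s hs => exact hS s hs x
  | zero => simp
  | add a b _ _ ha hb => rw [← add_assoc, hb, ha, map_add, add_assoc]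
  | neg a _ ha =>
    have h := ha (x + -a)
    rw [neg_add_cancel_right] at h
    rw [map_neg]
    exact eq_add_neg_of_add_eq h.symm

lemma Pi.closure_range_single_one (ι : Type*) [Finite ι] [DecidableEq ι] :
    AddSubgroup.closure (Set.range fun i : ι => Pi.single i (1 : ℤ)) = ⊤ := by
  rw [← Submodule.span_int_eq_addSubgroupClosure, ← Submodule.top_toAddSubgroup (R := ℤ),
    ← (Pi.basisFun ℤ ι).span_eq]
  congr 3
  ext1 i
  rw [Pi.basisFun_apply]

def entrySumModTwo (ι : Type*) [Fintype ι] : (ι → ℤ) →+ ZMod 2 :=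
  AddMonoidHom.mk' (fun v => ∑ i, (v i : ZMod 2)) fun v w => by
    simp [Finset.sum_add_distrib]

lemma entrySumModTwo_eq_zero_iff {ι : Type*} [Fintype ι] (v : ι → ℤ) :
    entrySumModTwo ι v = 0 ↔ Even (∑ i, v i) := by
  simp [entrySumModTwo, ← ZMod.intCast_eq_zero_iff_even]

lemma entrySumModTwo_single {ι : Type*} [Fintype ι] [DecidableEq ι] (i : ι) :
    entrySumModTwo ι (Pi.single i 1) = 1 := by
  simp [entrySumModTwo, Pi.single_apply]

lemma colSpan_le_ker_entrySumModTwo_iff {m r : ℕ} (M : Matrix (Fin m) (Fin r) ℤ) :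
    colSpan m r M ≤ (entrySumModTwo (Fin m)).ker ↔ ∀ j : Fin r, Even (∑ i, M i j) := by
  simp [colSpan, AddSubgroup.closure_le, Set.range_subset_iff, entrySumModTwo_eq_zero_iff]

lemma SACG_adj_add_single {m r : ℕ} {M : Matrix (Fin m) (Fin r) ℤ}
    (hloops : ∀ i : Fin m, (Pi.single i (1 : ℤ) : Fin m → ℤ) ∉ colSpan m r M)
    (x : (Fin m → ℤ) ⧸ colSpan m r M) (i : Fin m) :
    (SACG m r M).Adj x (x + mk (Pi.single i 1)) := by
  refine ⟨fun h => hloops i ?_, i, Or.inr (add_sub_cancel_left _ _)⟩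
  rwa [left_eq_add, eq_zero_iff] at h

lemma colSpan_le_ker_of_isBipartite {m r : ℕ} {M : Matrix (Fin m) (Fin r) ℤ}
    (hloops : ∀ i : Fin m, (Pi.single i (1 : ℤ) : Fin m → ℤ) ∉ colSpan m r M)
    (hbip : IsBipartite (SACG m r M)) : colSpan m r M ≤ (entrySumModTwo (Fin m)).ker := by
  obtain ⟨c, hc⟩ := (isBipartite_iff_exists_zmod_two_coloring _).mp hbip
  have hstep : ∀ s ∈ Set.range fun i : Fin m => Pi.single i (1 : ℤ), ∀ x,
      c (mk (x + s)) = c (mk x) + entrySumModTwo (Fin m) s := by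
    rintro _ ⟨i, rfl⟩ x
    have hne := hc _ _ (SACG_adj_add_single hloops (mk x) i)
    rw [entrySumModTwo_single, mk_add]
    generalize c (mk x) = a, c (mk x + mk (Pi.single i 1)) = b at hne
    decide +revert
  intro w hw
  have hcw : c (mk (0 + w)) = c (mk 0) + entrySumModTwo (Fin m) w :=
    map_add_eq_add_of_mem_closure (c ∘ mk) (entrySumModTwo (Fin m)) hstep
      ((Pi.closure_range_single_one (Fin m)).symm ▸ AddSubgroup.mem_top w) 0
  rw [zero_add, (eq_zero_iff w).mpr hw] at hcw
  exact left_eq_add.mp hcw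

lemma isBipartite_of_colSpan_le_ker {m r : ℕ} {M : Matrix (Fin m) (Fin r) ℤ}
    (hker : colSpan m r M ≤ (entrySumModTwo (Fin m)).ker) : IsBipartite (SACG m r M) := by
  set σ := lift (colSpan m r M) (entrySumModTwo (Fin m)) hker
  refine (isBipartite_iff_exists_zmod_two_coloring _).mpr ⟨σ, ?_⟩
  have hσ_single (i : Fin m) : σ (mk (Pi.single i 1)) = 1 := entrySumModTwo_single i
  rintro x y ⟨-, i, hdiff⟩ hσ
  have hσ_diff : σ (x - y) = 0 ∧ σ (y - x) = 0 := by simp only [map_sub, hσ, sub_self, and_self]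
  rcases hdiff with h | h <;> simp [h, hσ_single] at hσ_diff

theorem stmt_5 (m r : ℕ) (M : Matrix (Fin m) (Fin r) ℤ)
    (hloops : ∀ i : Fin m, (Pi.single i (1 : ℤ) : Fin m → ℤ) ∉ colSpan m r M) :
    IsBipartite (SACG m r M) ↔ ∀ j : Fin r, Even (∑ i : Fin m, M i j) := by
  rw [← colSpan_le_ker_entrySumModTwo_iff]
  exact ⟨colSpan_le_ker_of_isBipartite hloops, isBipartite_of_colSpan_le_ker⟩
end

section
/- Let y11, y21, y31, y32 be integers with y11 > 0, y21 > 0, y32 > 0, −y32 ≤ 2·y31 ≤ 0, and y32 ≠ 1, let M be the 3×2 matrix with rows (y11, 0), (y21, 0), (y31, y32), and let X = M^SACG. Then: χ(X) = 2 if and only if y11 + y21 + y31 and y32 are both even; χ(X) = 4 if and only if y11 = y21 = 1, y31 = −1, y32 > 1, and 3 does not divide y32; and otherwise χ(X) = 3. -/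
/-!
A homomorphism `φ : ℤ³ ⧸ H → ZMod N` sending every generator `eᵢ` into the middle arc
`[N / c, (c - 1) N / c]` yields a proper `c`-colouring: colour `u` by the arc of length `N / c`
containing `φ u`. Suitable weights give a 2-colouring when both column sums are even, a 3-colouring
outside the exceptional family `(1, 1, -1, n)` with `3 ∤ n`, and a 4-colouring of that family.

Conversely, a 2-colouring read in `ZMod 2` changes by `1` along every generator, so it is affine and
every element of `H` has even coordinate sum. In the exceptional family `e₂ ≡ e₀ + e₁`, so every
vertex lies on the triangles `u, u + e₀, u + e₀ + e₁` and `u, u + e₁, u + e₀ + e₁`; these force a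
3-colouring read in `ZMod 3` to be affine with slopes `σ, σ, 2σ`, and invariance under the column
`(0, 0, n)` gives `2 n σ = 0`, i.e. `3 ∣ n`.
-/

open Matrix QuotientAddGroup

section Affine

variable {ι G : Type*} [Fintype ι] [DecidableEq ι] [AddCommGroup G]

theorem eq_add_sum_smul_of_forall_add_single (f : (ι → ℤ) → G) (s : ι → G)
    (hf : ∀ x i, f (x + Pi.single i 1) = f x + s i) (x : ι → ℤ) :
    f x = f 0 + ∑ i, x i • s i := by
  have hsingle : ∀ y i (k : ℤ), f (y + Pi.single i k) = f y + k • s i := by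
    intro y i k
    induction k using Int.induction_on with
    | zero => simp
    | succ k ih => rw [Pi.single_add, ← add_assoc, hf, ih, add_smul, one_smul, add_assoc]
    | pred k ih =>
      have := hf (y + Pi.single i (-(k : ℤ) - 1)) i
      rw [add_assoc, ← Pi.single_add, sub_add_cancel, ih] at this
      rw [sub_smul, one_smul, ← add_sub_assoc, this, add_sub_cancel_right]
  suffices ∀ y, f (y + x) = f y + ∑ i, x i • s i by simpa using this 0
  induction x using Pi.single_induction with
  | zero => simp
  | add u v hu hv =>
    intro y
    simp only [← add_assoc, hv, hu, Pi.add_apply, add_smul, Finset.sum_add_distrib]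
  | single i k => intro y; simp [hsingle, Pi.single_apply]

theorem sum_smul_eq_zero_of_forall_add_mk_single {H : AddSubgroup (ι → ℤ)} (g : (ι → ℤ) ⧸ H → G)
    (s : ι → G) (hg : ∀ u i, g (u + mk (Pi.single i 1)) = g u + s i) {h : ι → ℤ} (hh : h ∈ H) :
    ∑ i, h i • s i = 0 := by
  have := eq_add_sum_smul_of_forall_add_single (g ∘ mk) s (fun x i => hg (mk x) i) h
  rwa [Function.comp_apply, (QuotientAddGroup.eq_zero_iff h).mpr hh, Function.comp_apply,
    mk_zero, left_eq_add] at this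

end Affine

theorem ZMod.mul_val_add_div_ne {N : ℕ} [NeZero N] {c : ℕ} (t a : ZMod N)
    (ha : N ≤ c * a.val) (ha' : c * a.val + N ≤ c * N) :
    c * (t + a).val / N ≠ c * t.val / N := by
  have div_lt_div : ∀ x y, x + N ≤ y → x / N < y / N := fun x y h => by
    have := Nat.div_le_div_right (c := N) h
    rw [Nat.add_div_right _ (NeZero.pos N)] at this
    omega
  have ht := t.val_lt
  have hav := a.val_lt
  rw [ZMod.val_add]
  rcases lt_or_ge (t.val + a.val) N with h | h
  · rw [Nat.mod_eq_of_lt h]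
    exact (div_lt_div _ _ (by rw [mul_add]; omega)).ne'
  · rw [Nat.mod_eq_sub_mod h, Nat.mod_eq_of_lt (by omega)]
    have e : c * (t.val + a.val - N) + c * N = c * t.val + c * a.val := by
      rw [← mul_add, Nat.sub_add_cancel h, mul_add]
    exact (div_lt_div _ _ (by linarith)).ne

section SACG

variable {m r : ℕ} {M : Matrix (Fin m) (Fin r) ℤ}

theorem mem_colSpan_iff (v : Fin m → ℤ) :
    v ∈ colSpan m r M ↔ ∃ w, M *ᵥ w = v := by
  rw [colSpan, ← Submodule.span_int_eq_addSubgroupClosure, Submodule.mem_toAddSubgroup]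
  exact (SetLike.ext_iff.mp M.range_mulVecLin v).symm

theorem SACG.colorable_of_addMonoidHom {N c : ℕ} [NeZero N] (hc : 0 < c)
    (φ : (Fin m → ℤ) ⧸ colSpan m r M →+ ZMod N)
    (hφ : ∀ i, N ≤ c * (φ (mk (Pi.single i 1))).val ∧
      c * (φ (mk (Pi.single i 1))).val + N ≤ c * N) :
    (SACG m r M).Colorable c := by
  have step : ∀ u v i, u - v = mk (Pi.single i 1) → c * (φ u).val / N ≠ c * (φ v).val / N := by
    intro u v i h
    rw [sub_eq_iff_eq_add'] at h
    rw [h, map_add]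
    exact ZMod.mul_val_add_div_ne _ _ (hφ i).1 (hφ i).2
  rw [SimpleGraph.colorable_iff_exists_bdd_nat_coloring]
  refine ⟨SimpleGraph.Coloring.mk (fun u => c * (φ u).val / N) ?_, fun u => ?_⟩
  · rintro u v ⟨-, i, h | h⟩
    · exact step u v i h
    · exact (step v u i h).symm
  · have := Nat.mul_lt_mul_of_pos_left (φ u).val_lt hc
    exact Nat.div_lt_of_lt_mul (by rwa [mul_comm N])

theorem SACG.colorable_of_weights {c : ℕ} (hc : 0 < c) {N : ℤ} (hN : 0 < N) (A : Fin m → ℤ)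
    (hA : ∀ i, N ≤ c * A i ∧ c * A i ≤ (c - 1) * N)
    (hAM : ∀ j, N ∣ (A ᵥ* M) j) : (SACG m r M).Colorable c := by
  lift N to ℕ using hN.le
  have : NeZero N := ⟨by omega⟩
  let ψ : (Fin m → ℤ) →+ ZMod N :=
    AddMonoidHom.mk' (fun x => ((A ⬝ᵥ x : ℤ) : ZMod N)) fun x y => by simp [dotProduct_add]
  have hker : colSpan m r M ≤ ψ.ker := by
    refine (AddSubgroup.closure_le _).mpr (Set.range_subset_iff.mpr fun j => ?_)
    exact (ZMod.intCast_zmod_eq_zero_iff_dvd _ _).mpr (hAM j)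
  have hval : ∀ i, ((lift _ ψ hker (mk (Pi.single i 1))).val : ℤ) = A i := by
    intro i
    have := hA i
    simp only [lift_mk, ψ, AddMonoidHom.mk'_apply, dotProduct_single, mul_one, ZMod.val_intCast]
    exact Int.emod_eq_of_lt (by nlinarith) (by nlinarith)
  refine SACG.colorable_of_addMonoidHom hc (lift _ ψ hker) fun i => ⟨?_, ?_⟩ <;>
    zify [hval i] <;> linarith [hA i]

theorem SACG.adj_add_mk_single {i : Fin m} (hi : Pi.single i (1 : ℤ) ∉ colSpan m r M)
    (u : (Fin m → ℤ) ⧸ colSpan m r M) : (SACG m r M).Adj (u + mk (Pi.single i 1)) u :=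
  ⟨by simpa [QuotientAddGroup.eq_zero_iff] using hi, i, Or.inl (add_sub_cancel_left u _)⟩

theorem SACG.not_colorable_one {i : Fin m} (hi : Pi.single i (1 : ℤ) ∉ colSpan m r M) :
    ¬ (SACG m r M).Colorable 1 :=
  fun ⟨C⟩ => C.valid (SACG.adj_add_mk_single hi 0) (Subsingleton.elim _ _)

theorem SACG.colorable_two_iff (hM : ∀ i, Pi.single i (1 : ℤ) ∉ colSpan m r M) :
    (SACG m r M).Colorable 2 ↔ ∀ j, Even (∑ i, M i j) := by
  constructor
  · rintro ⟨C⟩ j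
    -- `ZMod 2` is `Fin 2` by definition, so the colours can be added
    have flip : ∀ x y : ZMod 2, x ≠ y → x = y + 1 := by decide
    have := sum_smul_eq_zero_of_forall_add_mk_single (G := ZMod 2) C 1
      (fun u i => flip _ _ (C.valid (SACG.adj_add_mk_single (hM i) u)))
      (AddSubgroup.subset_closure ⟨j, rfl⟩)
    simpa [← ZMod.intCast_eq_zero_iff_even] using this
  · intro heven
    refine SACG.colorable_of_weights two_pos two_pos 1 (fun i => by norm_num) fun j => ?_
    simpa [Matrix.vecMul, dotProduct, even_iff_two_dvd] using heven j

end SACG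

section ThreeByTwo

variable {y11 y21 y31 y32 : ℤ}

theorem single_notMem_colSpan (h11 : 0 < y11) (h21 : 0 < y21)
    (h32 : 1 < y32) (i : Fin 3) :
    Pi.single i (1 : ℤ) ∉ colSpan 3 2 !![y11, 0; y21, 0; y31, y32] := by
  rw [mem_colSpan_iff]
  rintro ⟨w, hw⟩
  have h0 := congrFun hw 0
  have h1 := congrFun hw 1
  have h2 := congrFun hw 2
  fin_cases i <;> simp [Matrix.mulVec, dotProduct, Fin.sum_univ_two] at h0 h1 h2
  · simp [h1.resolve_left h21.ne'] at h0
  · simp [h0.resolve_left h11.ne'] at h1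
  · simp only [h0.resolve_left h11.ne', mul_zero, zero_add] at h2
    have := Int.eq_one_of_mul_eq_one_right (by omega) h2
    omega

-- If `e₂ ≡ e₀ + e₁`, then `u, u + e₀, u + e₀ + e₁` and `u, u + e₁, u + e₀ + e₁` are triangles.
theorem exists_slope_of_three_coloring {H : AddSubgroup (Fin 3 → ℤ)}
    (hH : (mk (Pi.single 2 1) : (Fin 3 → ℤ) ⧸ H) = mk (Pi.single 0 1) + mk (Pi.single 1 1))
    (g : (Fin 3 → ℤ) ⧸ H → ZMod 3) (hg : ∀ u i, g (u + mk (Pi.single i 1)) ≠ g u) :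
    ∃ σ ≠ 0, ∀ u i, g (u + mk (Pi.single i 1)) = g u + ![σ, σ, σ + σ] i := by
  set a : (Fin 3 → ℤ) ⧸ H := mk (Pi.single 0 1)
  set b : (Fin 3 → ℤ) ⧸ H := mk (Pi.single 1 1)
  have third_eq : ∀ p q q' r : ZMod 3, p ≠ q → q ≠ r → p ≠ r → p ≠ q' → q' ≠ r → q = q' := by
    decide
  have arith : ∀ p q r : ZMod 3, p ≠ q → q ≠ r → p ≠ r → q - p = r - q := by decide
  have ha u : g (u + a) ≠ g u := hg u 0
  have hb u : g (u + b) ≠ g u := hg u 1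
  have hab u : g (u + a + b) ≠ g u := by rw [add_assoc, ← hH]; exact hg u 2
  have hba u : g (u + b + a) = g (u + a + b) := by rw [add_right_comm]
  have hsame u : g (u + a) = g (u + b) :=
    third_eq _ _ _ _ (ha u).symm (hb (u + a)).symm (hab u).symm (hb u).symm
      (by rw [← hba]; exact (ha (u + b)).symm)
  have progression u : g (u + a) - g u = g (u + a + b) - g (u + a) :=
    arith _ _ _ (ha u).symm (hb (u + a)).symm (hab u).symm
  set σ := fun u => g (u + a) - g u with hσ
  have σ_add_a u : σ (u + a) = σ u := by
    simp only [hσ]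
    rw [hsame (u + a), progression]
  have σ_add_b u : σ (u + b) = σ u := by
    simp only [hσ]
    rw [hba, ← hsame u, progression]
  have σ_const u : σ u = σ 0 := by
    induction u using QuotientAddGroup.induction_on with | H x => ?_
    refine (eq_add_sum_smul_of_forall_add_single (σ ∘ mk) 0 (fun x i => ?_) x).trans (by simp)
    rw [Pi.zero_apply, add_zero, Function.comp_apply, Function.comp_apply, mk_add]
    fin_cases i
    · exact σ_add_a _
    · exact σ_add_b _
    · simp only [Fin.reduceFinMk, hH, ← add_assoc, σ_add_b, σ_add_a]
  have step_a u : g (u + a) = g u + σ 0 := sub_eq_iff_eq_add'.mp (σ_const u)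
  have step_b u : g (u + b) = g u + σ 0 := hsame u ▸ step_a u
  refine ⟨σ 0, sub_ne_zero.mpr (ha 0), fun u i => ?_⟩
  fin_cases i
  · exact step_a u
  · exact step_b u
  · simp only [Fin.reduceFinMk, hH, ← add_assoc]
    rw [← hba, step_a, step_b, add_assoc]
    rfl

theorem not_colorable_three_of_not_three_dvd {n : ℤ} (hn : 1 < n) (h3 : ¬ 3 ∣ n) :
    ¬ (SACG 3 2 !![1, 0; 1, 0; -1, n]).Colorable 3 := by
  rintro ⟨C⟩
  have hH : (mk (Pi.single 2 1) : (Fin 3 → ℤ) ⧸ colSpan 3 2 !![1, 0; 1, 0; -1, n]) =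
      mk (Pi.single 0 1) + mk (Pi.single 1 1) := by
    rw [← mk_add, QuotientAddGroup.eq, mem_colSpan_iff]
    exact ⟨![1, 0], by ext i; fin_cases i <;> simp [Matrix.mulVec, dotProduct]⟩
  obtain ⟨σ, hσ, hslope⟩ := exists_slope_of_three_coloring hH C fun u i =>
    C.valid (SACG.adj_add_mk_single (single_notMem_colSpan one_pos one_pos hn i) u)
  have := sum_smul_eq_zero_of_forall_add_mk_single _ _ hslope (AddSubgroup.subset_closure ⟨1, rfl⟩)
  have hn : (n : ZMod 3) * (σ + σ) = 0 := by simpa [Fin.sum_univ_three, mul_add] using this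
  have two_ne : ∀ y : ZMod 3, y + y = 0 → y = 0 := by decide
  exact (mul_eq_zero.mp hn).elim (fun h => h3 ((ZMod.intCast_zmod_eq_zero_iff_dvd n 3).mp h))
    fun h => hσ (two_ne _ h)

theorem colorable_four_of_two_le {n : ℤ} (hn : 2 ≤ n) :
    (SACG 3 2 !![1, 0; 1, 0; -1, n]).Colorable 4 := by
  refine SACG.colorable_of_weights four_pos (by omega : 0 < 2 * n)
    ![(n + 1) / 2, (n + 1) / 2, 2 * ((n + 1) / 2)] (fun i => ?_) (fun j => ?_)
  · fin_cases i <;> simp <;> omega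
  · fin_cases j <;> simp only [Matrix.vecMul, dotProduct, Fin.sum_univ_three] <;> simp
    · exact ⟨0, by ring⟩
    · exact ⟨(n + 1) / 2, by ring⟩

/-- A witness gives the circle-valued weights `t₀ = t₁ = p / (w n)`, `t₂ = k / n` in `[1/3, 2/3]`
of a 3-colouring of the graph of `!![y₁₁, 0; y₂₁, 0; -m, n]` with `y₁₁ + y₂₁ = w`. -/
def MiddleThirdSolvable (w n m : ℤ) : Prop :=
  ∃ k p : ℤ, n ≤ 3 * k ∧ 3 * k ≤ 2 * n ∧ w * n ≤ 3 * p ∧ 3 * p ≤ 2 * (w * n) ∧ n ∣ p - m * k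

theorem colorable_three_of_middleThirdSolvable (h11 : 0 < y11) (h21 : 0 < y21) (h32 : 0 < y32)
    (h : MiddleThirdSolvable (y11 + y21) y32 (-y31)) :
    (SACG 3 2 !![y11, 0; y21, 0; y31, y32]).Colorable 3 := by
  obtain ⟨k, p, hk1, hk2, hp1, hp2, q, hq⟩ := h
  have hw : 0 < y11 + y21 := by omega
  refine SACG.colorable_of_weights three_pos (mul_pos hw h32) ![p, p, k * (y11 + y21)]
    (fun i => ?_) (fun j => ?_)
  · fin_cases i <;> simp only [Fin.reduceFinMk, Matrix.cons_val, Nat.cast_ofNat] <;>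
      constructor <;> nlinarith
  · fin_cases j <;> simp [Matrix.vecMul, dotProduct, Fin.sum_univ_three]
    · exact ⟨q, by linear_combination (y11 + y21) * hq⟩
    · exact ⟨k, by ring⟩

theorem middleThirdSolvable_of_three_le {w n : ℤ} (hw : 3 ≤ w) (hn : 2 ≤ n) (m : ℤ) :
    MiddleThirdSolvable w n m := by
  obtain ⟨k, hk1, hk2⟩ : ∃ k, n ≤ 3 * k ∧ 3 * k ≤ n + 2 := ⟨(n + 2) / 3, by omega, by omega⟩
  obtain ⟨L, hL1, hL2⟩ : ∃ L, w * n ≤ 3 * L ∧ 3 * L ≤ w * n + 2 :=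
    ⟨(w * n + 2) / 3, by omega, by omega⟩
  obtain ⟨q, r, hdiv, hr0, hr1⟩ : ∃ q r, r + n * q = m * k - L ∧ 0 ≤ r ∧ r < n :=
    ⟨_, _, Int.emod_add_mul_ediv _ _, Int.emod_nonneg _ (by omega), Int.emod_lt_of_pos _ (by omega)⟩
  -- as `w ≥ 3`, the window `[L, L + n)` of residues mod `n` fits below `2 w n / 3`
  have hwn : 3 * n ≤ w * n := by nlinarith
  exact ⟨k, L + r, by omega, by omega, by omega, by omega, ⟨-q, by linear_combination hdiv⟩⟩

theorem middleThirdSolvable_two_of_three_dvd {n : ℤ} (hn : 0 < n) (h3 : 3 ∣ n) (m : ℤ) :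
    MiddleThirdSolvable 2 n m := by
  obtain ⟨d, rfl⟩ := h3
  -- with `k = d`, the product `m k` is `0`, `d` or `2 d` modulo `3 d`
  have hr := Int.emod_add_mul_ediv (m + 1) 3
  have hr0 := Int.emod_nonneg (m + 1) (by norm_num : (3 : ℤ) ≠ 0)
  have hr1 := Int.emod_lt_of_pos (m + 1) (by norm_num : (0 : ℤ) < 3)
  refine ⟨d, d * (2 + (m + 1) % 3), by omega, by omega, by nlinarith, by nlinarith,
    ⟨1 - (m + 1) / 3, by linear_combination d * hr⟩⟩

theorem middleThirdSolvable_two_of_le {n m : ℤ} (hm : 2 ≤ m) (h3m : 3 * m ≤ n) :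
    MiddleThirdSolvable 2 n m := by
  obtain ⟨j, hj1, hj2⟩ : ∃ j, m ≤ 3 * j ∧ 3 * j ≤ m + 2 := ⟨(m + 2) / 3, by omega, by omega⟩
  -- `k = ⌈j n / m⌉`, so that `m k` exceeds the multiple `j n` of `n` by less than `m ≤ n / 3`
  obtain ⟨k, ρ, hdiv, hρ0, hρ1⟩ : ∃ k ρ, ρ + m * k = j * n + m - 1 ∧ 0 ≤ ρ ∧ ρ < m :=
    ⟨_, _, Int.emod_add_mul_ediv _ _, Int.emod_nonneg _ (by omega), Int.emod_lt_of_pos _ (by omega)⟩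
  have hk1 : n ≤ 3 * k := le_of_mul_le_mul_left (by nlinarith) (by omega : 0 < m)
  have hk2 : 3 * k ≤ 2 * n := by
    refine le_of_mul_le_mul_left ?_ (by omega : 0 < m)
    rcases (by omega : 3 * j ≤ m + 1 ∨ (3 * j = m + 2 ∧ 4 ≤ m)) with h | ⟨h, h4⟩
    · nlinarith
    · nlinarith
  exact ⟨k, m * k - j * n + n, hk1, hk2, by omega, by omega, ⟨1 - j, by ring⟩⟩

theorem middleThirdSolvable_two_of_lt {n m : ℤ} (hm : 2 ≤ m) (hmn : 2 * m ≤ n)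
    (h3m : n < 3 * m) : MiddleThirdSolvable 2 n m := by
  rcases le_or_gt n 4 with hn4 | hn5
  · obtain ⟨rfl, rfl⟩ : n = 4 ∧ m = 2 := by omega
    exact ⟨2, 4, by norm_num, by norm_num, by norm_num, by norm_num, ⟨0, by norm_num⟩⟩
  -- `k = ⌈n / 3⌉`; if `m k` is not within `n / 3` of a multiple of `n`, then, as
  -- `n / 3 < m ≤ n / 2`, the product `m (k + 1)` is
  obtain ⟨k, hk1, hk2⟩ : ∃ k, n ≤ 3 * k ∧ 3 * k ≤ n + 2 := ⟨(n + 2) / 3, by omega, by omega⟩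
  obtain ⟨q, v, hdiv, hv0, hv1⟩ : ∃ q v, v + n * q = m * k ∧ 0 ≤ v ∧ v < n :=
    ⟨_, _, Int.emod_add_mul_ediv _ _, Int.emod_nonneg _ (by omega), Int.emod_lt_of_pos _ (by omega)⟩
  rcases (by omega : 3 * v ≤ n ∨ 2 * n ≤ 3 * v ∨ n < 3 * v ∧ 3 * v < 2 * n) with h | h | h
  · exact ⟨k, v + n, by omega, by omega, by omega, by omega, ⟨1 - q, by linear_combination hdiv⟩⟩
  · exact ⟨k, v, by omega, by omega, by omega, by omega, ⟨-q, by linear_combination hdiv⟩⟩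
  · exact ⟨k + 1, v + m, by omega, by omega, by omega, by omega, ⟨-q, by linear_combination hdiv⟩⟩

theorem middleThirdSolvable_two {n m : ℤ} (hn : 2 ≤ n) (hm : 0 ≤ m) (hmn : 2 * m ≤ n)
    (h : m ≠ 1 ∨ 3 ∣ n) : MiddleThirdSolvable 2 n m := by
  by_cases h3 : 3 ∣ n
  · exact middleThirdSolvable_two_of_three_dvd (by omega) h3 m
  rcases (by omega : m = 0 ∨ (2 ≤ m ∧ 3 * m ≤ n) ∨ (2 ≤ m ∧ n < 3 * m)) with rfl | h' | h'
  · exact ⟨(n + 2) / 3, n, by omega, by omega, by omega, by omega, ⟨1, by ring⟩⟩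
  · exact middleThirdSolvable_two_of_le h'.1 h'.2
  · exact middleThirdSolvable_two_of_lt h'.1 hmn h'.2

theorem colorable_three_of_not_exceptional (h11 : 0 < y11) (h21 : 0 < y21) (h32 : 2 ≤ y32)
    (h31l : -y32 ≤ 2 * y31) (h31r : 2 * y31 ≤ 0)
    (h : ¬ (y11 = 1 ∧ y21 = 1 ∧ y31 = -1 ∧ ¬ 3 ∣ y32)) :
    (SACG 3 2 !![y11, 0; y21, 0; y31, y32]).Colorable 3 := by
  refine colorable_three_of_middleThirdSolvable h11 h21 (by omega) ?_
  rcases (by omega : 3 ≤ y11 + y21 ∨ (y11 = 1 ∧ y21 = 1)) with hw | ⟨rfl, rfl⟩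
  · exact middleThirdSolvable_of_three_le hw h32 _
  · exact middleThirdSolvable_two h32 (by omega) (by omega) (by omega)

end ThreeByTwo

theorem stmt_11 (y11 y21 y31 y32 : ℤ) (h11 : 0 < y11) (h21 : 0 < y21) (h32 : 0 < y32)
    (h31l : -y32 ≤ 2 * y31) (h31r : 2 * y31 ≤ 0) (h32ne : y32 ≠ 1)
    (M : Matrix (Fin 3) (Fin 2) ℤ) (hM : M = !![y11, 0; y21, 0; y31, y32]) :
    ((SACG 3 2 M).chromaticNumber = 2 ↔ (Even (y11 + y21 + y31) ∧ Even y32)) ∧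
    ((SACG 3 2 M).chromaticNumber = 4 ↔
      (y11 = 1 ∧ y21 = 1 ∧ y31 = -1 ∧ 1 < y32 ∧ ¬ (3 : ℤ) ∣ y32)) ∧
    (¬ (Even (y11 + y21 + y31) ∧ Even y32) →
      ¬ (y11 = 1 ∧ y21 = 1 ∧ y31 = -1 ∧ 1 < y32 ∧ ¬ (3 : ℤ) ∣ y32) →
      (SACG 3 2 M).chromaticNumber = 3) := by
  subst hM
  have hn : 1 < y32 := by omega
  have hloop := single_notMem_colSpan (y31 := y31) h11 h21 hn
  have not_one := SACG.not_colorable_one (hloop 0)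
  have two_iff : (SACG 3 2 !![y11, 0; y21, 0; y31, y32]).Colorable 2 ↔
      Even (y11 + y21 + y31) ∧ Even y32 := by
    simp [SACG.colorable_two_iff hloop, Fin.forall_fin_two, Fin.sum_univ_three]
  have three_iff : (SACG 3 2 !![y11, 0; y21, 0; y31, y32]).Colorable 3 ↔
      ¬ (y11 = 1 ∧ y21 = 1 ∧ y31 = -1 ∧ 1 < y32 ∧ ¬ (3 : ℤ) ∣ y32) := by
    refine ⟨?_, fun h => colorable_three_of_not_exceptional h11 h21 (by omega) h31l h31r (by tauto)⟩
    rintro h3 ⟨rfl, rfl, rfl, -, h⟩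
    exact not_colorable_three_of_not_three_dvd hn h h3
  have four : (SACG 3 2 !![y11, 0; y21, 0; y31, y32]).Colorable 4 := by
    by_cases hF : y11 = 1 ∧ y21 = 1 ∧ y31 = -1 ∧ 1 < y32 ∧ ¬ (3 : ℤ) ∣ y32
    · obtain ⟨rfl, rfl, rfl, -, -⟩ := hF
      exact colorable_four_of_two_le (by omega)
    · exact (three_iff.mpr hF).mono (by norm_num)
  have chrom (k : ℕ) := SimpleGraph.chromaticNumber_eq_iff_colorable_not_colorable
    (G := SACG 3 2 !![y11, 0; y21, 0; y31, y32]) (n := k)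
  refine ⟨?_, ?_, fun hB hF => ?_⟩
  · rw [show (2 : ℕ∞) = (1 : ℕ) + 1 from rfl, chrom, two_iff]
    tauto
  · rw [show (4 : ℕ∞) = (3 : ℕ) + 1 from rfl, chrom, three_iff]
    tauto
  · rw [show (3 : ℕ∞) = (2 : ℕ) + 1 from rfl, chrom, two_iff, three_iff]
    exact ⟨hF, hB⟩
end

section
/- Let M be a 3×2 integer matrix with no zero rows such that no standard basis vector of ℤ^3 lies in the subgroup generated by the columns of M (so X = M^SACG has no loops). If some row of M has both entries divisible by 3, then χ(X) ≤ 3. -/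
open Matrix

def MiddleThird (N y : ℤ) : Prop := N ≤ 3 * (y % N) ∧ 3 * (y % N) ≤ 2 * N

namespace MiddleThird

theorem of_bounds {N y : ℤ} (h0 : 0 ≤ y) (hN : y < N) (h1 : N ≤ 3 * y) (h2 : 3 * y ≤ 2 * N) :
    MiddleThird N y := by
  rw [MiddleThird, Int.emod_eq_of_lt h0 hN]
  exact ⟨h1, h2⟩

theorem congr {N y y' : ℤ} (h : MiddleThird N y) (hy : y ≡ y' [ZMOD N]) : MiddleThird N y' := by
  rwa [MiddleThird, ← hy.eq]

theorem mul_left {N y : ℤ} (h : MiddleThird N y) {k : ℤ} (hk : 0 < k) :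
    MiddleThird (k * N) (k * y) := by
  rw [MiddleThird, Int.mul_emod_mul_of_pos _ _ hk]
  obtain ⟨h1, h2⟩ := h
  constructor <;> nlinarith

theorem le_three_mul_abs {N d : ℤ} (h : MiddleThird N d) (hd : |d| < N) : N ≤ 3 * |d| := by
  obtain ⟨h1, h2⟩ := h
  rcases abs_cases d with ⟨hab, hd0⟩ | ⟨hab, hd0⟩
  · rw [Int.emod_eq_of_lt hd0 (by omega)] at h1
    omega
  · rw [← Int.add_emod_right, Int.emod_eq_of_lt (by omega) (by omega)] at h2
    omega

end MiddleThird

theorem middleThird_half {N : ℤ} (hN : 2 ≤ N) : MiddleThird N (N / 2) :=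
  .of_bounds (by omega) (by omega) (by omega) (by omega)

theorem middleThird_sub_half {N : ℤ} (hN : 2 ≤ N) : MiddleThird N (N - N / 2) :=
  .of_bounds (by omega) (by omega) (by omega) (by omega)

theorem div_ne_div_of_middleThird {N u v : ℕ} (hu : u < N) (hv : v < N)
    (h : MiddleThird N ((u : ℤ) - v)) : 3 * u / N ≠ 3 * v / N := by
  intro heq
  have hu' := Nat.div_add_mod (3 * u) N
  have hv' := Nat.div_add_mod (3 * v) N
  have hu'' := Nat.mod_lt (3 * u) (show 0 < N by omega)
  have hv'' := Nat.mod_lt (3 * v) (show 0 < N by omega)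
  have := h.le_three_mul_abs (abs_lt.2 ⟨by omega, by omega⟩)
  rw [heq] at hu'
  rcases abs_cases ((u : ℤ) - v) with ⟨hab, -⟩ | ⟨hab, -⟩ <;> omega

theorem mulVec_mem_colSpan {m r : ℕ} (M : Matrix (Fin m) (Fin r) ℤ) (c : Fin r → ℤ) :
    M *ᵥ c ∈ colSpan m r M := by
  have : M *ᵥ c = ∑ j, c j • fun i => M i j := by
    ext i
    simp [mulVec, dotProduct, Finset.sum_apply, mul_comm]
  rw [this]
  exact AddSubgroup.sum_mem _ fun j _ =>
    AddSubgroup.zsmul_mem _ (AddSubgroup.subset_closure (Set.mem_range_self j)) _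

theorem colorable_three_of_middleThird {m r : ℕ} (M : Matrix (Fin m) (Fin r) ℤ) {N : ℕ} [NeZero N]
    (a : Fin m → ℤ) (hker : ∀ j, (N : ℤ) ∣ (a ᵥ* M) j) (hmid : ∀ i, MiddleThird N (a i)) :
    (SACG m r M).Colorable 3 := by
  let φ : (Fin m → ℤ) →+ ZMod N :=
    AddMonoidHom.mk' (fun z => ((a ⬝ᵥ z : ℤ) : ZMod N)) fun z w => by simp [dotProduct_add]
  have hφ : colSpan m r M ≤ φ.ker := by
    refine AddSubgroup.closure_le _ |>.2 ?_
    rintro _ ⟨j, rfl⟩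
    exact (ZMod.intCast_zmod_eq_zero_iff_dvd _ _).2 (hker j)
  let ψ := QuotientAddGroup.lift _ φ hφ
  have hψ : ∀ i, ψ (Pi.single i 1 : Fin m → ℤ) = a i := by
    intro i
    simp [ψ, φ, dotProduct_single]
  have key : ∀ {u v : ZMod N} (i : Fin m), u - v = a i → 3 * u.val / N ≠ 3 * v.val / N := by
    intro u v i huv
    refine div_ne_div_of_middleThird (ZMod.val_lt u) (ZMod.val_lt v) ((hmid i).congr ?_)
    rw [← ZMod.intCast_eq_intCast_iff]
    push_cast
    simp [huv]
  refine ⟨.mk (fun x => ⟨3 * (ψ x).val / N, Nat.div_lt_of_lt_mul (by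
    have := ZMod.val_lt (ψ x); omega)⟩) ?_⟩
  rintro x y ⟨-, i, hxy | hxy⟩ heq
  · exact key i (by rw [← map_sub, hxy, hψ]) (Fin.val_eq_of_eq heq)
  · exact key i (by rw [← map_sub, hxy, hψ]) (Fin.val_eq_of_eq heq).symm

theorem exists_middleThird_of_three_dvd_row {ι κ : Type*} [Fintype ι] [DecidableEq ι]
    (M : Matrix ι κ ℤ) {i₀ : ι} (h3 : ∀ j, 3 ∣ M i₀ j) {s : ℤ} (hs : 0 < s) {a : ι → ℤ}
    (hker : ∀ j, 3 * s ∣ (a ᵥ* M) j) (hmid : ∀ i ≠ i₀, MiddleThird (3 * s) (a i)) :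
    ∃ b : ι → ℤ, (∀ j, 3 * s ∣ (b ᵥ* M) j) ∧ ∀ i, MiddleThird (3 * s) (b i) := by
  refine ⟨a + Pi.single i₀ (s * (1 - a i₀ / s)), fun j => ?_, fun i => ?_⟩
  · rw [add_vecMul, single_vecMul, Pi.add_apply, Pi.smul_apply, smul_eq_mul, row_apply]
    refine dvd_add (hker j) ?_
    rw [mul_comm 3]
    exact mul_dvd_mul (dvd_mul_right s _) (h3 j)
  · rcases eq_or_ne i i₀ with rfl | hi
    · have hb : a i + s * (1 - a i / s) = a i % s + s := by rw [Int.emod_def]; ring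
      have h0 := Int.emod_nonneg (a i) hs.ne'
      have h1 := Int.emod_lt_of_pos (a i) hs
      rw [Pi.add_apply, Pi.single_eq_same, hb]
      exact .of_bounds (by omega) (by omega) (by omega) (by omega)
    · simpa [hi] using hmid i hi

theorem exists_pos_smul_isCoprime {w : Fin 2 → ℤ} (hw : w ≠ 0) :
    ∃ G : ℤ, 0 < G ∧ ∃ z : Fin 2 → ℤ, w = G • z ∧ IsCoprime (z 0) (z 1) := by
  have hg : 0 < Int.gcd (w 0) (w 1) :=
    Int.gcd_pos_iff.2 (by contrapose! hw; ext j; fin_cases j <;> simp [hw])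
  obtain ⟨g, z₀, z₁, hg0, hcop, h0, h1⟩ := Int.exists_gcd_one' hg
  exact ⟨g, by exact_mod_cast hg0, ![z₀, z₁], by ext j; fin_cases j <;> simp [h0, h1, mul_comm],
    Int.isCoprime_iff_gcd_eq_one.2 hcop⟩

theorem exists_vecMul_dvd_of_dvd_dotProduct {ι : Type*} [Fintype ι] [DecidableEq ι]
    (M : Matrix ι (Fin 2) ℤ) {i₀ : ι} {G : ℤ} {z : Fin 2 → ℤ} (hrow : M i₀ = G • z)
    (hz : IsCoprime (z 0) (z 1)) {N : ℤ} {x : ι → ℤ} (hx : N ∣ x ⬝ᵥ M *ᵥ ![z 1, -z 0]) :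
    ∃ a : ι → ℤ, (∀ j, G * N ∣ (a ᵥ* M) j) ∧ ∀ i ≠ i₀, a i = G * x i := by
  obtain ⟨p, q, hpq⟩ := hz
  set y := x ᵥ* M
  obtain ⟨k, hk⟩ := hx
  rw [dotProduct_mulVec] at hk
  simp only [dotProduct, Fin.sum_univ_two, cons_val_zero, cons_val_one] at hk
  -- `y = (p y₀ + q y₁) • z + (y × z) • (q, -p)`, and `N` divides `y × z`
  refine ⟨G • x - Pi.single i₀ (p * y 0 + q * y 1), fun j => ?_, fun i hi => by simp [hi]⟩
  rw [sub_vecMul, smul_vecMul, single_vecMul, show M.row i₀ = G • z from hrow]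
  simp only [Pi.sub_apply, Pi.smul_apply, smul_eq_mul]
  revert j
  refine Fin.forall_fin_two.2 ⟨⟨q * k, ?_⟩, ⟨-(p * k), ?_⟩⟩
  · linear_combination G * q * hk - G * y 0 * hpq
  · linear_combination -G * p * hk - G * y 1 * hpq

theorem exists_dvd_add_of_abs_add_abs_ne_one {A B : ℤ} (h : |A| + |B| ≠ 1) :
    ∃ N > 0, ∃ x y : ℤ, N ∣ A * x + B * y ∧ MiddleThird N x ∧ MiddleThird N y := by
  have divisor : ∀ k : ℤ, |k| ≠ 1 → ∃ N, 2 ≤ N ∧ N ∣ k := by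
    intro k hk
    obtain ⟨p, hp, hpk⟩ := Nat.exists_prime_and_dvd (show k.natAbs ≠ 1 by
      rw [Int.abs_eq_natAbs] at hk; omega)
    exact ⟨p, by exact_mod_cast hp.two_le, Int.natCast_dvd.2 hpk⟩
  by_cases hsum : |A + B| = 1
  · have hdiff : |A - B| ≠ 1 := by
      simp only [Int.abs_eq_natAbs] at *
      omega
    obtain ⟨N, hN, k, hk⟩ := divisor _ hdiff
    exact ⟨N, by omega, N / 2, N - N / 2, ⟨k * (N / 2) + B, by linear_combination (N / 2) * hk⟩,
      middleThird_half hN, middleThird_sub_half hN⟩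
  · obtain ⟨N, hN, k, hk⟩ := divisor _ hsum
    exact ⟨N, by omega, N / 2, N / 2, ⟨k * (N / 2), by linear_combination (N / 2) * hk⟩,
      middleThird_half hN, middleThird_half hN⟩

theorem exists_eq_single_of_abs_add_abs_eq_one {v : Fin 3 → ℤ} {i₀ : Fin 3} (h0 : v i₀ = 0)
    (h : |v (i₀.succAbove 0)| + |v (i₀.succAbove 1)| = 1) :
    ∃ i, v = Pi.single i 1 ∨ -v = Pi.single i 1 := by
  have eq_single : ∀ u : Fin 3 → ℤ, u i₀ = 0 → ∀ k : Fin 2,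
      (∀ l, u (i₀.succAbove l) = (Pi.single k 1 : Fin 2 → ℤ) l) →
      u = Pi.single (i₀.succAbove k) 1 := by
    intro u hu0 k hu
    ext j
    rcases Fin.eq_self_or_eq_succAbove i₀ j with rfl | ⟨l, rfl⟩
    · simp [hu0]
    · simp [hu l, Pi.single_apply]
  rcases (show (v (i₀.succAbove 0) = 1 ∨ v (i₀.succAbove 0) = -1) ∧ v (i₀.succAbove 1) = 0 ∨
      v (i₀.succAbove 0) = 0 ∧ (v (i₀.succAbove 1) = 1 ∨ v (i₀.succAbove 1) = -1) by
    simp only [Int.abs_eq_natAbs] at h; omega) with ⟨h1 | h1, h2⟩ | ⟨h1, h2 | h2⟩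
  · exact ⟨_, .inl (eq_single v h0 0 fun l => by fin_cases l <;> simp [h1, h2])⟩
  · exact ⟨_, .inr (eq_single (-v) (by simp [h0]) 0 fun l => by fin_cases l <;> simp [h1, h2])⟩
  · exact ⟨_, .inl (eq_single v h0 1 fun l => by fin_cases l <;> simp [h1, h2])⟩
  · exact ⟨_, .inr (eq_single (-v) (by simp [h0]) 1 fun l => by fin_cases l <;> simp [h1, h2])⟩

theorem exists_middleThird_witness (M : Matrix (Fin 3) (Fin 2) ℤ) {i₀ : Fin 3}
    (h3 : ∀ j, 3 ∣ M i₀ j) (hrow : M i₀ ≠ 0) (hloops : ∀ i c, M *ᵥ c ≠ Pi.single i 1) :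
    ∃ N > 0, ∃ a : Fin 3 → ℤ, (∀ j, N ∣ (a ᵥ* M) j) ∧ ∀ i, MiddleThird N (a i) := by
  obtain ⟨w, hw⟩ : ∃ w : Fin 2 → ℤ, M i₀ = (3 : ℤ) • w :=
    ⟨fun j => M i₀ j / 3, funext fun j => (Int.mul_ediv_cancel' (h3 j)).symm⟩
  obtain ⟨G, hG, z, rfl, hz⟩ :=
    exists_pos_smul_isCoprime (w := w) (by rintro rfl; exact hrow (by simpa using hw))
  rw [smul_smul] at hw
  set α := M *ᵥ ![z 1, -z 0]
  have hα0 : α i₀ = 0 := by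
    simp only [α, mulVec, dotProduct, hw, Pi.smul_apply, smul_eq_mul, Fin.sum_univ_two,
      cons_val_zero, cons_val_one]
    ring
  have hα : |α (i₀.succAbove 0)| + |α (i₀.succAbove 1)| ≠ 1 := fun h => by
    obtain ⟨i, hi | hi⟩ := exists_eq_single_of_abs_add_abs_eq_one hα0 h
    · exact hloops i _ hi
    · exact hloops i _ (by rwa [mulVec_neg])
  obtain ⟨N, hN, x, y, hdvd, hx, hy⟩ := exists_dvd_add_of_abs_add_abs_ne_one hα
  obtain ⟨a, hker, ha⟩ := exists_vecMul_dvd_of_dvd_dotProduct M hw hz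
    (N := N) (x := Fin.insertNth i₀ 0 ![x, y])
    (by simpa [α, dotProduct, Fin.sum_univ_succAbove _ i₀, mul_comm] using hdvd)
  have hmid : ∀ i ≠ i₀, MiddleThird (3 * (G * N)) (a i) := by
    intro i hi
    obtain ⟨k, rfl⟩ := Fin.exists_succAbove_eq hi
    rw [ha _ hi, ← mul_assoc]
    fin_cases k
    · simpa using hx.mul_left (by positivity : 0 < 3 * G)
    · simpa using hy.mul_left (by positivity : 0 < 3 * G)
  obtain ⟨b, hb, hbmid⟩ := exists_middleThird_of_three_dvd_row M h3 (by positivity)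
    (fun j => by rw [← mul_assoc]; exact hker j) hmid
  exact ⟨_, by positivity, b, hb, hbmid⟩

theorem stmt_13 (M : Matrix (Fin 3) (Fin 2) ℤ)
    (hrows : ∀ i : Fin 3, ¬ (M i 0 = 0 ∧ M i 1 = 0))
    (hloops : ∀ i : Fin 3, (Pi.single i (1 : ℤ) : Fin 3 → ℤ) ∉ colSpan 3 2 M)
    (hdiv : ∃ i : Fin 3, (3 : ℤ) ∣ M i 0 ∧ (3 : ℤ) ∣ M i 1) :
    (SACG 3 2 M).chromaticNumber ≤ 3 := by
  obtain ⟨i₀, h0, h1⟩ := hdiv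
  obtain ⟨N, hN, a, hker, hmid⟩ := exists_middleThird_witness M (i₀ := i₀)
    (Fin.forall_fin_two.2 ⟨h0, h1⟩) (fun h => hrows i₀ ⟨congrFun h 0, congrFun h 1⟩)
    (fun i c h => hloops i (h ▸ mulVec_mem_colSpan M c))
  lift N to ℕ using hN.le
  have : NeZero N := ⟨by omega⟩
  exact (colorable_three_of_middleThird M a hker hmid).chromaticNumber_le.trans (by norm_num)
end

section
/- Let M be a 4×2 integer matrix with no zero rows such that no standard basis vector of ℤ^4 lies in the subgroup generated by the columns of M (so Y = M^SACG has no loops). If some row of M has both entries divisible by 3, then χ(Y) ≤ 3. -/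
/-!
A weight vector `φ ∈ [1/3, 2/3]^m` that takes integer values on `H` gives a proper 3-colouring:
colour `x + H` by the third of `ℝ/ℤ` containing `φ · x`, since neighbours differ there by some
`φ j` modulo `ℤ`. To find `φ`, let row `i` be `3 (a, b) = 3 g (a', b')` with `g = gcd(a, b)` and
`α a' + β b' = 1`, and change the basis `c₀, c₁` (the columns of `M`) of `H` to
`D = a' c₁ - b' c₀`, which vanishes at `i`, and `μ = α c₀ + β c₁`, for which `μ i = 3 g`.
Taking `φ j = u` or `1 - u` according to the sign of `D j` makes `φ · D = u ∑ |D j|` modulo `ℤ`;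
as `H` has no loops, `∑ |D j| ≠ 1`, so a suitable `u` exists. Since `μ i ≥ 3`, the free weight
`φ i` can then be chosen in `[1/3, 2/3]` with `φ · μ` integral.
-/

open Set
open scoped Matrix

lemma natFloor_three_mul_fract_ne {r s : ℝ} {z : ℤ} (h : r - s - z ∈ Icc (1/3 : ℝ) (2/3)) :
    ⌊3 * Int.fract r⌋₊ ≠ ⌊3 * Int.fract s⌋₊ := by
  intro heq
  obtain ⟨h₁, h₂⟩ := h
  have hr := Nat.floor_le (by positivity : 0 ≤ 3 * Int.fract r)
  have hr' := Nat.lt_floor_add_one (3 * Int.fract r)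
  have hs := Nat.floor_le (by positivity : 0 ≤ 3 * Int.fract s)
  have hs' := Nat.lt_floor_add_one (3 * Int.fract s)
  rw [heq] at hr hr'
  have hw : Int.fract r - Int.fract s = r - s - z + ((z + ⌊s⌋ - ⌊r⌋ : ℤ) : ℝ) := by
    push_cast [Int.fract]; ring
  have hneg : z + ⌊s⌋ - ⌊r⌋ < 0 := by
    exact_mod_cast (show ((z + ⌊s⌋ - ⌊r⌋ : ℤ) : ℝ) < 0 by linarith)
  have hgt : -1 < z + ⌊s⌋ - ⌊r⌋ := by
    exact_mod_cast (show (-1 : ℝ) < ((z + ⌊s⌋ - ⌊r⌋ : ℤ) : ℝ) by linarith)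
  omega

lemma exists_mem_Icc_add_mul_eq_int (C : ℝ) {n : ℤ} (hn : 3 ≤ n) :
    ∃ t ∈ Icc (1/3 : ℝ) (2/3), ∃ z : ℤ, C + n * t = z := by
  have hn' : (3 : ℝ) ≤ n := by exact_mod_cast hn
  refine ⟨(⌈C + n / 3⌉ - C) / n, ⟨?_, ?_⟩, ⌈C + n / 3⌉, by field_simp; ring⟩
  · rw [le_div_iff₀ (by linarith)]
    linarith [Int.le_ceil (C + n / 3)]
  · rw [div_le_iff₀ (by linarith)]
    linarith [Int.ceil_lt_add_one (C + n / 3)]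

lemma exists_mem_Icc_mul_eq_int {n : ℤ} (h₀ : 0 ≤ n) (h₁ : n ≠ 1) :
    ∃ u ∈ Icc (1/3 : ℝ) (2/3), ∃ z : ℤ, n * u = z := by
  obtain rfl | rfl | hn : n = 0 ∨ n = 2 ∨ 3 ≤ n := by omega
  · exact ⟨1/2, by norm_num, 0, by simp⟩
  · exact ⟨1/2, by norm_num, 1, by norm_num⟩
  · simpa using exists_mem_Icc_add_mul_eq_int 0 hn

lemma exists_eq_single_or_neg_of_sum_abs_eq_one {ι : Type*} [Fintype ι] [DecidableEq ι]
    {D : ι → ℤ} (hD : ∑ j, |D j| = 1) : ∃ j, D = Pi.single j 1 ∨ D = -Pi.single j 1 := by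
  obtain ⟨j, hj⟩ : ∃ j, D j ≠ 0 := by
    by_contra! h
    simp [h] at hD
  have hsplit := Finset.add_sum_erase Finset.univ (fun k => |D k|) (Finset.mem_univ j)
  have hrest := Finset.sum_nonneg fun k (_ : k ∈ Finset.univ.erase j) => abs_nonneg (D k)
  have hDj : |D j| = 1 := by have := abs_pos.mpr hj; omega
  have hzero : ∀ k ≠ j, D k = 0 := fun k hk => abs_eq_zero.mp <|
    (Finset.sum_eq_zero_iff_of_nonneg fun k _ => abs_nonneg (D k)).mp (by omega) k
      (Finset.mem_erase.mpr ⟨hk, Finset.mem_univ k⟩)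
  have hsingle : D = Pi.single j (D j) := by
    ext k
    rcases eq_or_ne k j with rfl | hk
    · simp
    · simp [hk, hzero k hk]
  refine ⟨j, ?_⟩
  rcases abs_eq (zero_le_one' ℤ) |>.mp hDj with h | h
  · left; rwa [h] at hsingle
  · right; rwa [h, Pi.single_neg] at hsingle

theorem SimpleGraph.colorable_three_of_forall_adj_sub_mem_Icc {V : Type*} (G : SimpleGraph V)
    (f : V → ℝ) (hf : ∀ x y, G.Adj x y → ∃ z : ℤ, f x - f y - z ∈ Icc (1/3 : ℝ) (2/3)) :
    G.Colorable 3 := by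
  refine (G.colorable_iff_exists_bdd_nat_coloring 3).mpr
    ⟨SimpleGraph.Coloring.mk (fun v => ⌊3 * Int.fract (f v)⌋₊) fun hxy => ?_, fun v => ?_⟩
  · obtain ⟨z, hz⟩ := hf _ _ hxy
    exact natFloor_three_mul_fract_ne hz
  · refine (Nat.floor_lt (by positivity : (0 : ℝ) ≤ 3 * Int.fract (f v))).mpr ?_
    push_cast
    linarith [Int.fract_lt_one (f v)]

section Weight

variable {m : ℕ}

def weight (φ : Fin m → ℝ) : (Fin m → ℤ) →+ ℝ where
  toFun x := ∑ j, φ j * x j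
  map_zero' := by simp
  map_add' x y := by simp [mul_add, Finset.sum_add_distrib]

def integralLattice (φ : Fin m → ℝ) : AddSubgroup (Fin m → ℤ) :=
  (Int.castAddHom ℝ).range.comap (weight φ)

lemma mem_integralLattice {φ : Fin m → ℝ} {x : Fin m → ℤ} :
    x ∈ integralLattice φ ↔ ∃ z : ℤ, weight φ x = z := by
  simp only [integralLattice, AddSubgroup.mem_comap, AddMonoidHom.mem_range, Int.coe_castAddHom,
    eq_comm]

@[simp]
lemma weight_single (φ : Fin m → ℝ) (j : Fin m) : weight φ (Pi.single j 1) = φ j := by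
  simp [weight, Pi.single_apply]

lemma weight_update (φ : Fin m → ℝ) (i : Fin m) (t : ℝ) (x : Fin m → ℤ) :
    weight (Function.update φ i t) x = weight φ x + (t - φ i) * x i := by
  have hterm : ∀ j, Function.update φ i t j * x j =
      φ j * x j + (Pi.single i ((t - φ i) * x i) : Fin m → ℝ) j := by
    intro j
    rcases eq_or_ne j i with rfl | hj
    · simp; ring
    · simp [hj]
  simp [weight, hterm, Finset.sum_add_distrib]

lemma exists_weight_mem_integralLattice (D : Fin m → ℤ) (hD : ∑ j, |D j| ≠ 1) :
    ∃ ψ : Fin m → ℝ, (∀ j, ψ j ∈ Icc (1/3 : ℝ) (2/3)) ∧ D ∈ integralLattice ψ := by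
  obtain ⟨u, hu, z, hz⟩ :=
    exists_mem_Icc_mul_eq_int (Finset.sum_nonneg fun j _ => abs_nonneg (D j)) hD
  refine ⟨fun j => if 0 ≤ D j then u else 1 - u, fun j => ?_, ?_⟩
  · obtain ⟨hu₁, hu₂⟩ := hu
    dsimp only
    split_ifs <;> constructor <;> linarith
  · have hterm : ∀ d : ℤ, (if 0 ≤ d then u else 1 - u) * d = u * |d| + min d 0 := by
      intro d
      split_ifs with hd
      · simp [abs_of_nonneg hd, min_eq_right hd]
      · push Not at hd
        simp [abs_of_neg hd, min_eq_left hd.le]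
        ring
    refine mem_integralLattice.mpr ⟨z + ∑ j, min (D j) 0, ?_⟩
    change ∑ j, (if 0 ≤ D j then u else 1 - u) * (D j : ℝ) = _
    simp only [hterm, Finset.sum_add_distrib, ← Finset.mul_sum]
    push_cast [← hz]
    ring

lemma exists_weight_pair_mem_integralLattice (D μ : Fin m → ℤ) (i : Fin m) (hDi : D i = 0)
    (hμi : 3 ≤ μ i) (hD : ∑ j, |D j| ≠ 1) :
    ∃ φ : Fin m → ℝ, (∀ j, φ j ∈ Icc (1/3 : ℝ) (2/3)) ∧
      D ∈ integralLattice φ ∧ μ ∈ integralLattice φ := by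
  obtain ⟨ψ, hψ, hDψ⟩ := exists_weight_mem_integralLattice D hD
  obtain ⟨t, ht, z, hz⟩ := exists_mem_Icc_add_mul_eq_int (weight ψ μ - ψ i * μ i) hμi
  refine ⟨Function.update ψ i t, ?_, ?_, ?_⟩
  · exact (Function.forall_update_iff ψ fun _ s => s ∈ Icc (1/3 : ℝ) (2/3)).mpr
      ⟨ht, fun j _ => hψ j⟩
  · simpa [mem_integralLattice, weight_update, hDi] using hDψ
  · refine mem_integralLattice.mpr ⟨z, ?_⟩
    rw [weight_update, ← hz]
    ring

end Weight

theorem SACG_colorable_three_of_le_integralLattice {m r : ℕ} (M : Matrix (Fin m) (Fin r) ℤ)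
    (φ : Fin m → ℝ) (hφ : ∀ j, φ j ∈ Icc (1/3 : ℝ) (2/3)) (hM : colSpan m r M ≤ integralLattice φ) :
    (SACG m r M).Colorable 3 := by
  have hstep : ∀ (x y : Fin m → ℤ) (j : Fin m),
      (x : (Fin m → ℤ) ⧸ colSpan m r M) - y = (Pi.single j 1 : Fin m → ℤ) →
        ∃ z : ℤ, weight φ x - weight φ y - z = φ j := by
    intro x y j h
    rw [← QuotientAddGroup.mk_sub, QuotientAddGroup.eq_iff_sub_mem] at h
    obtain ⟨z, hz⟩ := mem_integralLattice.mp (hM h)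
    exact ⟨z, by simp [← hz]⟩
  refine (SACG m r M).colorable_three_of_forall_adj_sub_mem_Icc
    (fun v => weight φ (Quotient.out v)) ?_
  rintro v w ⟨-, j, h | h⟩
  · obtain ⟨z, hz⟩ := hstep v.out w.out j (by simpa using h)
    exact ⟨z, hz ▸ hφ j⟩
  · obtain ⟨z, hz⟩ := hstep w.out v.out j (by simpa using h)
    obtain ⟨h₁, h₂⟩ := hφ j
    refine ⟨-z - 1, ?_, ?_⟩ <;> push_cast <;> linarith

lemma exists_weight_of_row_dvd_three {m : ℕ} (M : Matrix (Fin m) (Fin 2) ℤ)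
    (hloops : ∀ j : Fin m, (Pi.single j (1 : ℤ) : Fin m → ℤ) ∉ colSpan m 2 M) {i : Fin m}
    (hi : ¬(M i 0 = 0 ∧ M i 1 = 0)) (h₀ : 3 ∣ M i 0) (h₁ : 3 ∣ M i 1) :
    ∃ φ : Fin m → ℝ, (∀ j, φ j ∈ Icc (1/3 : ℝ) (2/3)) ∧ colSpan m 2 M ≤ integralLattice φ := by
  obtain ⟨a, ha⟩ := h₀
  obtain ⟨b, hb⟩ := h₁
  have hgcd : 0 < Int.gcd a b := Int.gcd_pos_iff.mpr (by omega)
  obtain ⟨g, a', b', hg, hcop, rfl, rfl⟩ := Int.exists_gcd_one' hgcd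
  obtain ⟨α, β, hαβ⟩ := Int.isCoprime_iff_gcd_eq_one.mpr hcop
  have hcol : ∀ k, Mᵀ k ∈ colSpan m 2 M := fun k => AddSubgroup.subset_closure ⟨k, rfl⟩
  set D := a' • Mᵀ 1 - b' • Mᵀ 0 with hD
  set μ := α • Mᵀ 0 + β • Mᵀ 1 with hμ
  have hDi : D i = 0 := by simp [hD, ha, hb]; ring
  have hμi : μ i = 3 * g := by simp [hμ, ha, hb]; linear_combination 3 * g * hαβ
  have hDmem : D ∈ colSpan m 2 M :=
    sub_mem (zsmul_mem (hcol 1) _) (zsmul_mem (hcol 0) _)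
  have hDsum : ∑ j, |D j| ≠ 1 := fun h => by
    obtain ⟨j, hj | hj⟩ := exists_eq_single_or_neg_of_sum_abs_eq_one h
    · exact hloops j (hj ▸ hDmem)
    · exact hloops j (by simpa [hj] using neg_mem hDmem)
  obtain ⟨φ, hφ, hDφ, hμφ⟩ :=
    exists_weight_pair_mem_integralLattice D μ i hDi (by omega) hDsum
  have hc₀ : Mᵀ 0 = a' • μ - β • D := by
    ext j; simp [hD, hμ]; linear_combination (-M j 0) * hαβ
  have hc₁ : Mᵀ 1 = b' • μ + α • D := by
    ext j; simp [hD, hμ]; linear_combination (-M j 1) * hαβ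
  refine ⟨φ, hφ, (AddSubgroup.closure_le _).mpr
    (range_subset_iff.mpr (Fin.forall_fin_two.mpr ⟨?_, ?_⟩))⟩
  · change Mᵀ 0 ∈ integralLattice φ
    rw [hc₀]
    exact sub_mem (zsmul_mem hμφ _) (zsmul_mem hDφ _)
  · change Mᵀ 1 ∈ integralLattice φ
    rw [hc₁]
    exact add_mem (zsmul_mem hμφ _) (zsmul_mem hDφ _)

theorem stmt_14 (M : Matrix (Fin 4) (Fin 2) ℤ)
    (hrows : ∀ i : Fin 4, ¬ (M i 0 = 0 ∧ M i 1 = 0))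
    (hloops : ∀ i : Fin 4, (Pi.single i (1 : ℤ) : Fin 4 → ℤ) ∉ colSpan 4 2 M)
    (hdiv : ∃ i : Fin 4, (3 : ℤ) ∣ M i 0 ∧ (3 : ℤ) ∣ M i 1) :
    (SACG 4 2 M).chromaticNumber ≤ 3 := by
  obtain ⟨i, h₀, h₁⟩ := hdiv
  obtain ⟨φ, hφ, hM⟩ := exists_weight_of_row_dvd_three M hloops (hrows i) h₀ h₁
  exact_mod_cast (SACG_colorable_three_of_le_integralLattice M φ hφ hM).chromaticNumber_le
end

section
/- Let M be a 5×2 integer matrix. Then either some row of M has both entries divisible by 3, or there exist distinct row indices i ≠ j and ε ∈ {1, −1} such that both entries of the vector (row i of M) + ε·(row j of M) are divisible by 3. -/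
/-! Reducing the rows mod 3 gives five vectors in `𝔽₃²`. If none is zero, they define five points
of the projective line over `𝔽₃`, which has only `3 + 1 = 4` points, so two rows agree up to a unit
of `𝔽₃`, i.e. up to a sign `±1`. -/

open Projectivization

theorem exists_ne_units_smul_eq_of_finrank_eq_two {k V ι : Type*} [Field k] [Finite k]
    [AddCommGroup V] [Module k V] [Finite ι] (hV : Module.finrank k V = 2)
    (f : ι → V) (hf : ∀ i, f i ≠ 0) (hcard : Nat.card k + 1 < Nat.card ι) :
    ∃ i j, i ≠ j ∧ ∃ a : kˣ, a • f j = f i := by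
  have : Module.Finite k V := Module.finite_of_finrank_eq_succ hV
  have : Finite V := Module.finite_of_finite k
  rw [← card_of_finrank_two k V hV] at hcard
  obtain ⟨i, j, hmk, hij⟩ := Function.not_injective_iff.mp fun hinj ↦
    hcard.not_ge (Nat.card_le_card_of_injective (fun i ↦ mk k (f i) (hf i)) hinj)
  exact ⟨i, j, hij, (mk_eq_mk_iff k _ _ (hf i) (hf j)).mp hmk⟩

theorem ZMod.exists_int_sign_eq_neg_unit (u : (ZMod 3)ˣ) :
    ∃ ε : ℤ, (ε = 1 ∨ ε = -1) ∧ (ε : ZMod 3) = -u := by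
  obtain rfl | rfl : u = 1 ∨ u = -1 := by revert u; decide
  · exact ⟨-1, .inr rfl, by simp⟩
  · exact ⟨1, .inl rfl, by simp⟩

theorem three_dvd_iff_intCast_zmod_eq_zero (x : ℤ) : (3 : ℤ) ∣ x ↔ (x : ZMod 3) = 0 :=
  (ZMod.intCast_zmod_eq_zero_iff_dvd x 3).symm

theorem stmt_16 (M : Matrix (Fin 5) (Fin 2) ℤ) :
    (∃ i : Fin 5, (3 : ℤ) ∣ M i 0 ∧ (3 : ℤ) ∣ M i 1) ∨
    (∃ i j : Fin 5, i ≠ j ∧ ∃ ε : ℤ, (ε = 1 ∨ ε = -1) ∧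
      (3 : ℤ) ∣ M i 0 + ε * M j 0 ∧ (3 : ℤ) ∣ M i 1 + ε * M j 1) := by
  let R : Fin 5 → Fin 2 → ZMod 3 := M.map (Int.cast : ℤ → ZMod 3)
  simp only [three_dvd_iff_intCast_zmod_eq_zero, Int.cast_add, Int.cast_mul]
  by_cases h0 : ∃ i, R i = 0
  · obtain ⟨i, hi⟩ := h0
    exact .inl ⟨i, congrFun hi 0, congrFun hi 1⟩
  push Not at h0
  obtain ⟨i, j, hij, a, ha⟩ := exists_ne_units_smul_eq_of_finrank_eq_two
    (Module.finrank_fin_fun (ZMod 3)) R h0 (by simp)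
  obtain ⟨ε, hε, hεa⟩ := ZMod.exists_int_sign_eq_neg_unit a
  have hrow (k : Fin 2) : (M i k : ZMod 3) + ε * M j k = 0 := by
    have hk := congrFun ha k
    simp only [R, Pi.smul_apply, Units.smul_def, smul_eq_mul, Matrix.map_apply] at hk
    rw [hεa]
    linear_combination -hk
  exact .inr ⟨i, j, hij, ε, hε, hrow 0, hrow 1⟩
end
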